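/- arXiv:2604.13194 — 2 statements merged into one kernel-verified Lean document; each statement's English description precedes it below -/
import Mathlib

section
/- Let n ≥ 2 and 1 ≤ m < n be integers and let d : Fin m → ℕ with d_i ≥ 1 for all i. For each i ∈ Fin m define q_i ∈ MvPolynomial (Fin (n+1)) ℂ by: q_i := X_{i+1} if d_i = 1; q_i := X_0^{d_i−1}·X_{i+1} + X_0^{d_i−1}·X_n + X_{i+1}·X_n^{d_i−1} if d_i > 1 is odd; and q_i := X_0^{d_i} + X_{i+1}·X_n^{d_i−1} if d_i is even. Then for every z : Fin (n+1) → ℂ with z ≠ 0 and z_ℓ = 0 for all ℓ with 1 ≤ ℓ ≤ n−1, at least one of the following holds: (a) there exists i with eval z q_i ≠ 0, or (b) the m×m matrix M with entries M_{i,j} := eval z (pderiv (j+1) q_i), for i, j ∈ Fin m, has nonzero determinant. (In other words, the explicit tuple (q_1, …, q_m) has no singular points on the locus {[z] ∈ ℙⁿ : z_1 = ⋯ = z_{n−1} = 0}.) -/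
open MvPolynomial

/-- The explicit polynomials `q_1, …, q_m` of degrees `d_1, …, d_m` have no singular points on
the locus `{[z] ∈ ℙⁿ : z_1 = ⋯ = z_{n-1} = 0}`: at every nonzero `z` on this locus, either some
`q_i` is nonvanishing, or the `m × m` matrix of partials with respect to `X_1, …, X_m` has
nonzero determinant. -/
theorem stmt_8 (n m : ℕ) (hn : 2 ≤ n) (hm : 1 ≤ m) (hmn : m < n)
    (d : Fin m → ℕ) (hd : ∀ i, 1 ≤ d i)
    (q : Fin m → MvPolynomial (Fin (n + 1)) ℂ)
    (hq : ∀ i : Fin m, q i =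
      if d i = 1 then
        X (⟨(i : ℕ) + 1, by have := i.isLt; omega⟩ : Fin (n + 1))
      else if Odd (d i) then
        X (0 : Fin (n + 1)) ^ (d i - 1) *
            X (⟨(i : ℕ) + 1, by have := i.isLt; omega⟩ : Fin (n + 1)) +
          X (0 : Fin (n + 1)) ^ (d i - 1) * X (Fin.last n) +
          X (⟨(i : ℕ) + 1, by have := i.isLt; omega⟩ : Fin (n + 1)) *
            X (Fin.last n) ^ (d i - 1)
      else
        X (0 : Fin (n + 1)) ^ d i +
          X (⟨(i : ℕ) + 1, by have := i.isLt; omega⟩ : Fin (n + 1)) *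
            X (Fin.last n) ^ (d i - 1))
    (z : Fin (n + 1) → ℂ) (hz : z ≠ 0)
    (hzA : ∀ ℓ : Fin (n + 1), 1 ≤ (ℓ : ℕ) → (ℓ : ℕ) ≤ n - 1 → z ℓ = 0) :
    (∃ i : Fin m, eval z (q i) ≠ 0) ∨
    (Matrix.of fun i j : Fin m =>
      eval z (pderiv (⟨(j : ℕ) + 1, by have := j.isLt; omega⟩ : Fin (n + 1)) (q i))).det ≠ 0 := by
  by_cases hA : ∃ i : Fin m, eval z (q i) ≠ 0
  · exact Or.inl hA
  push_neg at hA
  right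
  set v : Fin m → Fin (n + 1) := fun i => ⟨(i : ℕ) + 1, by have := i.isLt; omega⟩ with hv
  have hab : z 0 ≠ 0 ∨ z (Fin.last n) ≠ 0 := by
    by_contra h
    push_neg at h
    apply hz
    funext ℓ
    show z ℓ = 0
    rcases Nat.eq_zero_or_pos (ℓ : ℕ) with h0 | h1
    · have : ℓ = 0 := Fin.ext h0
      rw [this]; exact h.1
    by_cases hl : (ℓ : ℕ) ≤ n - 1
    · exact hzA ℓ h1 hl
    · have : ℓ = Fin.last n := Fin.ext (by have := ℓ.isLt; simp only [Fin.val_last]; omega)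
      rw [this]; exact h.2
  have hval : ∀ i : Fin m, ((v i : Fin (n + 1)) : ℕ) = (i : ℕ) + 1 := fun i => rfl
  have h0v : ∀ j : Fin m, (0 : Fin (n + 1)) ≠ v j := by
    intro j
    intro h
    have : ((0 : Fin (n+1)) : ℕ) = ((v j : Fin (n+1)) : ℕ) := by rw [h]
    rw [hval] at this
    simp at this
  have hlv : ∀ j : Fin m, Fin.last n ≠ v j := by
    intro j h
    have : ((Fin.last n : Fin (n+1)) : ℕ) = ((v j : Fin (n+1)) : ℕ) := by rw [h]
    rw [hval, Fin.val_last] at this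
    have := j.isLt; omega
  have hvv : ∀ i j : Fin m, i ≠ j → v i ≠ v j := by
    intro i j hij h
    have : ((v i : Fin (n+1)) : ℕ) = ((v j : Fin (n+1)) : ℕ) := by rw [h]
    rw [hval, hval] at this
    exact hij (Fin.ext (by omega))
  have hzv : ∀ i : Fin m, z (v i) = 0 := by
    intro i
    exact hzA (v i) (by rw [hval]; omega) (by rw [hval]; have := i.isLt; omega)
  have hqv : ∀ i : Fin m, q i =
      if d i = 1 then X (v i)
      else if Odd (d i) then
        X (0 : Fin (n + 1)) ^ (d i - 1) * X (v i) + X (0 : Fin (n + 1)) ^ (d i - 1) * X (Fin.last n) +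
          X (v i) * X (Fin.last n) ^ (d i - 1)
      else X (0 : Fin (n + 1)) ^ d i + X (v i) * X (Fin.last n) ^ (d i - 1) := hq
  set c : Fin m → ℂ := fun i =>
    if d i = 1 then 1
    else if Odd (d i) then z 0 ^ (d i - 1) + z (Fin.last n) ^ (d i - 1)
    else z (Fin.last n) ^ (d i - 1) with hc
  have key : (Matrix.of fun i j : Fin m =>
      eval z (pderiv (⟨(j : ℕ) + 1, by have := j.isLt; omega⟩ : Fin (n + 1)) (q i)))
      = Matrix.diagonal c := by
    ext i j
    show eval z (pderiv (v j) (q i)) = _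
    by_cases hij : i = j
    · subst hij
      rw [Matrix.diagonal_apply_eq, hqv i]
      simp only [hc]
      split_ifs with h1 h2 <;>
        simp [pderiv_mul, pderiv_pow, pderiv_X_self, pderiv_X_of_ne (h0v i),
          pderiv_X_of_ne (hlv i), hzv i]
    · rw [Matrix.diagonal_apply_ne _ hij, hqv i]
      split_ifs with h1 h2 <;>
        simp [pderiv_mul, pderiv_pow, pderiv_X_self, pderiv_X_of_ne (h0v j),
          pderiv_X_of_ne (hlv j), pderiv_X_of_ne (hvv i j hij), hzv i]
  rw [key, Matrix.det_diagonal]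
  apply Finset.prod_ne_zero_iff.mpr
  intro i _
  have hqi := hA i
  rw [hqv i] at hqi
  simp only [hc]
  split_ifs with h1 h2
  · rw [if_pos h1] at hqi
    exact one_ne_zero
  · -- odd case
    have hdi := hd i
    have hd3 : 2 ≤ d i := by omega
    rw [if_neg h1, if_pos h2] at hqi
    simp only [eval_add, eval_mul, eval_pow, eval_X, hzv i, mul_zero, zero_mul, add_zero,
      zero_add] at hqi
    by_cases hb : z (Fin.last n) = 0
    · have ha : z 0 ≠ 0 := hab.resolve_right (by simp [hb])
      have hne : z 0 ^ (d i - 1) ≠ 0 := pow_ne_zero _ ha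
      rw [hb, zero_pow (by omega : d i - 1 ≠ 0), add_zero]
      exact hne
    · have ha : z 0 ^ (d i - 1) = 0 := by
        rcases mul_eq_zero.mp hqi with h | h
        · exact h
        · exact absurd h hb
      rw [ha, zero_add]
      exact pow_ne_zero _ hb
  · -- even case
    have hdi := hd i
    rw [if_neg h1, if_neg h2] at hqi
    simp only [eval_add, eval_mul, eval_pow, eval_X, hzv i, zero_mul, add_zero] at hqi
    have ha : z 0 = 0 :=
      pow_eq_zero_iff ((by omega : d i ≠ 0)) |>.mp hqi
    have hb : z (Fin.last n) ≠ 0 := hab.resolve_left (by simp [ha])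
    exact pow_ne_zero _ hb
end

section
/- Let n ≥ 1 and let A, C be n×n real matrices with A·C = C·A, det A > 0 and det C > 0. Assume that A and C are semisimple as endomorphisms of ℝⁿ (via Matrix.toLin'), and that every real eigenvalue of A and every real eigenvalue of C (i.e., every real root of the characteristic polynomial) equals 1 or −1. Then the three finite dimensions dim(ker(A + 1) ⊓ ker(C + 1)), dim(ker(A + 1) ⊓ ker(C − 1)), and dim(ker(A − 1) ⊓ ker(C + 1)) are all congruent modulo 2, where kernels are taken of the induced endomorphisms of ℝⁿ. -/
open Matrix Polynomial Filter Module

namespace Stmt10Aux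

/-- A monic real polynomial with no nonnegative real root has positive value at `0`. -/
lemma eval_zero_pos_of_no_nonneg_root (p : ℝ[X]) (hm : p.Monic)
    (h : ∀ x : ℝ, 0 ≤ x → ¬ p.IsRoot x) : 0 < p.eval 0 := by
  rcases eq_or_ne p.natDegree 0 with h0 | h0
  · rw [hm.natDegree_eq_zero] at h0
    simp [h0]
  · by_contra hle
    push_neg at hle
    have hne : p.eval 0 ≠ 0 := h 0 le_rfl
    have hdeg : 0 < p.degree := natDegree_pos_iff_degree_pos.mp (Nat.pos_of_ne_zero h0)
    have htend := p.tendsto_atTop_of_leadingCoeff_nonneg hdeg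
      (by rw [hm.leadingCoeff]; norm_num)
    obtain ⟨t, ht1, ht0⟩ :=
      ((htend.eventually_ge_atTop 1).and (eventually_ge_atTop (0:ℝ))).exists
    have hmem : (0:ℝ) ∈ Set.Icc (p.eval 0) (p.eval t) := ⟨hle, le_trans zero_le_one ht1⟩
    obtain ⟨c, hc, hc0⟩ := intermediate_value_Icc ht0
      (p.continuous.continuousOn (s := Set.Icc 0 t)) hmem
    exact h c hc.1 hc0

/-- A monic real polynomial with no nonpositive real root has `(-1)^deg * p 0 > 0`. -/
lemma neg_one_pow_eval_zero_pos (p : ℝ[X]) (hm : p.Monic)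
    (h : ∀ x : ℝ, x ≤ 0 → ¬ p.IsRoot x) :
    0 < (-1 : ℝ) ^ p.natDegree * p.eval 0 := by
  set n := p.natDegree with hn
  set r : ℝ[X] := C ((-1:ℝ)^n) * p.comp (-X) with hr
  have hqn : (-X : ℝ[X]).natDegree ≠ 0 := by simp
  have hlc : (p.comp (-X)).leadingCoeff = (-1:ℝ)^n := by
    rw [leadingCoeff_comp hqn, hm.leadingCoeff, one_mul, leadingCoeff_neg, leadingCoeff_X]
  have hrm : r.Monic := by
    have hC : leadingCoeff (C ((-1:ℝ)^n)) = (-1:ℝ)^n := leadingCoeff_C _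
    rw [Monic, hr, leadingCoeff_mul, hC, hlc, ← pow_add]
    simp [pow_mul]
  have hreval : ∀ x : ℝ, r.eval x = (-1:ℝ)^n * p.eval (-x) := by
    intro x; simp [hr, eval_comp]
  have hroots : ∀ x : ℝ, 0 ≤ x → ¬ r.IsRoot x := by
    intro x hx hroot
    rw [IsRoot, hreval] at hroot
    have hne : p.eval (-x) ≠ 0 := h (-x) (neg_nonpos.mpr hx)
    have hpw : ((-1:ℝ)^n) ≠ 0 := by positivity
    exact hne (by
      rcases mul_eq_zero.mp hroot with h1 | h1
      · exact absurd h1 hpw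
      · exact h1)
  have := eval_zero_pos_of_no_nonneg_root r hrm hroots
  rwa [hreval 0, neg_zero] at this

/-- A monic real polynomial with no real root has even degree. -/
lemma even_natDegree_of_no_root (p : ℝ[X]) (hm : p.Monic) (h : ∀ x : ℝ, ¬ p.IsRoot x) :
    Even p.natDegree := by
  have h2 := eval_zero_pos_of_no_nonneg_root p hm (fun x _ => h x)
  have h1 := neg_one_pow_eval_zero_pos p hm (fun x _ => h x)
  by_contra hodd
  rw [Nat.not_even_iff_odd] at hodd
  rw [hodd.neg_one_pow] at h1
  nlinarith

variable {V : Type*} [AddCommGroup V] [Module ℝ V] [FiniteDimensional ℝ V]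

lemma matrix_eval_charpoly {m : Type*} [DecidableEq m] [Fintype m] (M : Matrix m m ℝ) (x : ℝ) :
    M.charpoly.eval x = (x • (1 : Matrix m m ℝ) - M).det := by
  rw [Matrix.charpoly, ← Polynomial.coe_evalRingHom, RingHom.map_det]
  congr 1
  ext i j
  by_cases h : i = j <;>
    simp [charmatrix_apply, Matrix.smul_apply, Matrix.one_apply, h, Matrix.sub_apply,
      Matrix.diagonal_apply]

/-- A real root of the characteristic polynomial is an eigenvalue. -/
lemma hasEigenvalue_of_charpoly_isRoot (f : Module.End ℝ V) {x : ℝ}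
    (hx : f.charpoly.IsRoot x) : f.HasEigenvalue x := by
  classical
  have hdet : LinearMap.det (x • (1 : Module.End ℝ V) - f) = 0 := by
    let b := Module.finBasis ℝ V
    rw [← LinearMap.det_toMatrix b]
    have hmat : LinearMap.toMatrix b b (x • (1 : Module.End ℝ V) - f)
        = x • (1 : Matrix _ _ ℝ) - LinearMap.toMatrix b b f := by
      rw [map_sub, _root_.map_smul, LinearMap.toMatrix_one]
    rw [hmat, ← matrix_eval_charpoly, LinearMap.charpoly_toMatrix f b]
    exact hx
  have hker : ⊥ < LinearMap.ker (x • (1 : Module.End ℝ V) - f) :=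
    LinearMap.bot_lt_ker_of_det_eq_zero hdet
  obtain ⟨v, hv, hv0⟩ := SetLike.exists_of_lt hker
  have hfv : f v = x • v := by
    rw [LinearMap.mem_ker, LinearMap.sub_apply, LinearMap.smul_apply, Module.End.one_apply,
      sub_eq_zero] at hv
    exact hv.symm
  exact Module.End.hasEigenvalue_of_hasEigenvector
    ⟨Module.End.mem_eigenspace_iff.mpr hfv, by simpa using hv0⟩

/-- An eigenvalue of the restriction of `φ` to an invariant subspace is an eigenvalue of `φ`. -/
lemma hasEigenvalue_of_restrict {φ : Module.End ℝ V} {p : Submodule ℝ V}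
    (hp : ∀ x ∈ p, φ x ∈ p) {x : ℝ} (h : Module.End.HasEigenvalue (φ.restrict hp) x) :
    φ.HasEigenvalue x := by
  obtain ⟨v, hv⟩ := h.exists_hasEigenvector
  have hφv : φ ↑v = x • (↑v : V) := by
    have h1 : (↑(φ.restrict hp v) : V) = φ ↑v := LinearMap.restrict_coe_apply φ hp v
    rw [← h1, hv.apply_eq_smul]
    rfl
  exact Module.End.hasEigenvalue_of_hasEigenvector
    ⟨Module.End.mem_eigenspace_iff.mpr hφv, fun h0 => hv.2 (by exact_mod_cast h0)⟩

/-- The characteristic polynomial is multiplicative over an invariant complementary pair. -/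
lemma charpoly_isCompl (φ : Module.End ℝ V) {p q : Submodule ℝ V} (hpq : IsCompl p q)
    (hp : ∀ x ∈ p, φ x ∈ p) (hq : ∀ x ∈ q, φ x ∈ q) :
    φ.charpoly = (φ.restrict hp).charpoly * (φ.restrict hq).charpoly := by
  let e := Submodule.prodEquivOfIsCompl p q hpq
  have hψ : (φ.restrict hp).prodMap (φ.restrict hq) = e.symm.conj φ := by
    refine LinearMap.ext fun uw => ?_
    rw [LinearEquiv.conj_apply, LinearEquiv.symm_symm, LinearMap.comp_apply,
      LinearMap.comp_apply, LinearEquiv.coe_coe, LinearEquiv.coe_coe,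
      LinearEquiv.eq_symm_apply]
    obtain ⟨u, w⟩ := uw
    simp [e, Submodule.coe_prodEquivOfIsCompl', LinearMap.restrict_coe_apply, map_add]
  rw [← LinearEquiv.charpoly_conj e.symm φ, ← hψ, LinearMap.charpoly_prodMap]

/-- The determinant is multiplicative over an invariant complementary pair. -/
lemma det_isCompl (φ : Module.End ℝ V) {p q : Submodule ℝ V} (hpq : IsCompl p q)
    (hp : ∀ x ∈ p, φ x ∈ p) (hq : ∀ x ∈ q, φ x ∈ q) :
    LinearMap.det φ = LinearMap.det (φ.restrict hp) * LinearMap.det (φ.restrict hq) := by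
  rw [LinearMap.det_eq_sign_charpoly_coeff, LinearMap.det_eq_sign_charpoly_coeff,
    LinearMap.det_eq_sign_charpoly_coeff, charpoly_isCompl φ hpq hp hq,
    ← Submodule.finrank_add_eq_of_isCompl hpq, Polynomial.mul_coeff_zero, pow_add]
  ring

/-- Step 1: for a semisimple endomorphism with positive determinant whose real eigenvalues lie
in `{1, -1}`, the eigenspace for `-1` is even-dimensional. -/
lemma even_finrank_ker_add_one (φ : Module.End ℝ V) (hss : φ.IsSemisimple)
    (hdet : 0 < LinearMap.det φ)
    (heig : ∀ x : ℝ, φ.HasEigenvalue x → x = 1 ∨ x = -1) :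
    Even (finrank ℝ (LinearMap.ker (φ + 1))) := by
  set E := LinearMap.ker (φ + 1) with hE
  have hEinv : ∀ x ∈ E, φ x ∈ E := by
    intro x hx
    simp only [hE, LinearMap.mem_ker, LinearMap.add_apply, Module.End.one_apply] at hx ⊢
    calc φ (φ x) + φ x = φ (φ x + x) := (map_add φ _ _).symm
      _ = 0 := by rw [hx, map_zero]
  obtain ⟨K, hKmem, hEK⟩ := Module.End.isSemisimple_iff.mp hss E
    ((Module.End.mem_invtSubmodule φ).mpr fun x hx => hEinv x hx)
  have hKinv : ∀ x ∈ K, φ x ∈ K := fun x hx =>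
    ((Module.End.mem_invtSubmodule φ).mp hKmem) hx
  -- restriction to `E` is `-id`
  have hF : φ.restrict hEinv = (-1 : ℝ) • (LinearMap.id : E →ₗ[ℝ] E) := by
    refine LinearMap.ext fun v => Subtype.ext ?_
    have hv := v.2
    simp only [hE, LinearMap.mem_ker, LinearMap.add_apply, Module.End.one_apply] at hv
    have hvv : φ (↑v : V) = -(↑v : V) := by
      linear_combination (norm := abel) hv
    simp [LinearMap.restrict_coe_apply, hvv]
  -- the restriction to `K` has positive determinant
  have hGroots : ∀ x : ℝ, x ≤ 0 → ¬ (φ.restrict hKinv).charpoly.IsRoot x := by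
    intro x hx hroot
    have hev := hasEigenvalue_of_charpoly_isRoot (φ.restrict hKinv) hroot
    obtain ⟨v, hv⟩ := hev.exists_hasEigenvector
    have hφv : φ ↑v = x • (↑v : V) := by
      have h1 : (↑(φ.restrict hKinv v) : V) = φ ↑v := LinearMap.restrict_coe_apply φ hKinv v
      rw [← h1, hv.apply_eq_smul]; rfl
    have hvne : (↑v : V) ≠ 0 := fun h0 => hv.2 (by exact_mod_cast h0)
    have hx12 : x = 1 ∨ x = -1 := heig x
      (Module.End.hasEigenvalue_of_hasEigenvector ⟨Module.End.mem_eigenspace_iff.mpr hφv, hvne⟩)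
    have hxm1 : x = -1 := by rcases hx12 with h1 | h1 <;> [linarith; exact h1]
    have hvE : (↑v : V) ∈ E := by
      simp only [hE, LinearMap.mem_ker, LinearMap.add_apply, Module.End.one_apply]
      rw [hφv, hxm1]; simp
    have : (↑v : V) = 0 := (Submodule.disjoint_def.mp hEK.disjoint) _ hvE v.2
    exact hvne this
  have hGpos : 0 < LinearMap.det (φ.restrict hKinv) := by
    rw [LinearMap.det_eq_sign_charpoly_coeff, Polynomial.coeff_zero_eq_eval_zero,
      ← LinearMap.charpoly_natDegree]
    exact neg_one_pow_eval_zero_pos _ (LinearMap.charpoly_monic _) hGroots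
  have hsplit := det_isCompl φ hEK hEinv hKinv
  rw [hF, LinearMap.det_smul, LinearMap.det_id, mul_one] at hsplit
  have hpow : 0 < (-1 : ℝ) ^ (finrank ℝ E) := by
    rw [hsplit] at hdet
    nlinarith
  by_contra hodd
  rw [Nat.not_even_iff_odd] at hodd
  rw [hodd.neg_one_pow] at hpow
  linarith

/-- Step 2 core: for a semisimple endomorphism whose real eigenvalues lie in `{1, -1}`, the
codimension of the sum of the two eigenspaces is even. -/
lemma finrank_eq_sum_eigen (σ : Module.End ℝ V) (hss : σ.IsSemisimple)
    (heig : ∀ x : ℝ, σ.HasEigenvalue x → x = 1 ∨ x = -1) :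
    ∃ m, finrank ℝ V =
      finrank ℝ (LinearMap.ker (σ + 1)) + finrank ℝ (LinearMap.ker (σ - 1)) + 2 * m := by
  set Em := LinearMap.ker (σ + 1) with hEm
  set Ep := LinearMap.ker (σ - 1) with hEp
  have hEmval : ∀ x ∈ Em, σ x = -x := by
    intro x hx
    simp only [hEm, LinearMap.mem_ker, LinearMap.add_apply, Module.End.one_apply] at hx
    linear_combination (norm := abel) hx
  have hEpval : ∀ x ∈ Ep, σ x = x := by
    intro x hx
    simp only [hEp, LinearMap.mem_ker, LinearMap.sub_apply, Module.End.one_apply] at hx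
    linear_combination (norm := abel) hx
  have hEminv : ∀ x ∈ Em, σ x ∈ Em := by
    intro x hx
    simp only [hEm, LinearMap.mem_ker, LinearMap.add_apply, Module.End.one_apply] at hx ⊢
    calc σ (σ x) + σ x = σ (σ x + x) := (map_add σ _ _).symm
      _ = 0 := by rw [hx, map_zero]
  have hEpinv : ∀ x ∈ Ep, σ x ∈ Ep := by
    intro x hx
    simp only [hEp, LinearMap.mem_ker, LinearMap.sub_apply, Module.End.one_apply] at hx ⊢
    calc σ (σ x) - σ x = σ (σ x - x) := (map_sub σ _ _).symm
      _ = 0 := by rw [hx, map_zero]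
  set P := Em ⊔ Ep with hP
  have hPmem : P ∈ σ.invtSubmodule :=
    Module.End.invtSubmodule.sup_mem
      ((Module.End.mem_invtSubmodule σ).mpr fun x hx => hEminv x hx)
      ((Module.End.mem_invtSubmodule σ).mpr fun x hx => hEpinv x hx)
  obtain ⟨K, hKmem, hPK⟩ := Module.End.isSemisimple_iff.mp hss P hPmem
  have hKinv : ∀ x ∈ K, σ x ∈ K := fun x hx => ((Module.End.mem_invtSubmodule σ).mp hKmem) hx
  -- no real eigenvalues on K
  have hGroots : ∀ x : ℝ, ¬ (σ.restrict hKinv).charpoly.IsRoot x := by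
    intro x hroot
    have hev := hasEigenvalue_of_charpoly_isRoot (σ.restrict hKinv) hroot
    obtain ⟨v, hv⟩ := hev.exists_hasEigenvector
    have hφv : σ ↑v = x • (↑v : V) := by
      have h1 : (↑(σ.restrict hKinv v) : V) = σ ↑v := LinearMap.restrict_coe_apply σ hKinv v
      rw [← h1, hv.apply_eq_smul]; rfl
    have hvne : (↑v : V) ≠ 0 := fun h0 => hv.2 (by exact_mod_cast h0)
    have hx12 : x = 1 ∨ x = -1 := heig x
      (Module.End.hasEigenvalue_of_hasEigenvector ⟨Module.End.mem_eigenspace_iff.mpr hφv, hvne⟩)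
    have hvP : (↑v : V) ∈ P := by
      rcases hx12 with h1 | h1
      · refine Submodule.mem_sup_right ?_
        simp only [hEp, LinearMap.mem_ker, LinearMap.sub_apply, Module.End.one_apply]
        rw [hφv, h1, one_smul, sub_self]
      · refine Submodule.mem_sup_left ?_
        simp only [hEm, LinearMap.mem_ker, LinearMap.add_apply, Module.End.one_apply]
        rw [hφv, h1]; simp
    exact hvne ((Submodule.disjoint_def.mp hPK.disjoint) _ hvP v.2)
  have hKeven : Even (finrank ℝ K) := by
    rw [← LinearMap.charpoly_natDegree (σ.restrict hKinv)]
    exact even_natDegree_of_no_root _ (LinearMap.charpoly_monic _) hGroots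
  -- dimensions
  have hdisj : Em ⊓ Ep = ⊥ := by
    rw [eq_bot_iff]
    intro x hx
    have h1 := hEmval x hx.1
    have h2 := hEpval x hx.2
    have hx0 : x = 0 := by
      have hxx : -x = x := by rw [← h1, h2]
      have h2x : (2 : ℝ) • x = 0 := by
        rw [two_smul]
        linear_combination (norm := abel) - hxx
      have := congrArg (fun y => (2⁻¹ : ℝ) • y) h2x
      simpa [smul_smul] using this
    simp [hx0]
  have hsum : finrank ℝ P = finrank ℝ Em + finrank ℝ Ep := by
    have h := Submodule.finrank_sup_add_finrank_inf_eq Em Ep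
    rw [hdisj] at h
    simpa [hP] using h
  have htot : finrank ℝ P + finrank ℝ K = finrank ℝ V :=
    Submodule.finrank_add_eq_of_isCompl hPK
  obtain ⟨m, hm⟩ := hKeven
  exact ⟨m, by omega⟩

lemma finrank_ker_restrict (η : Module.End ℝ V) {U : Submodule ℝ V} (hU : ∀ x ∈ U, η x ∈ U) :
    finrank ℝ (LinearMap.ker (η.restrict hU)) =
      finrank ℝ (U ⊓ LinearMap.ker η : Submodule ℝ V) := by
  have hker : LinearMap.ker (η.restrict hU) = (LinearMap.ker η).comap U.subtype := by
    ext x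
    simp only [LinearMap.mem_ker, Submodule.mem_comap, Submodule.coe_subtype]
    constructor
    · intro h
      have := congrArg (fun y : U => (y : V)) h
      simpa [LinearMap.restrict_coe_apply] using this
    · intro h
      exact Subtype.ext (by simpa [LinearMap.restrict_coe_apply] using h)
  rw [hker, ← Submodule.finrank_map_subtype_eq U, Submodule.map_comap_subtype]

/-- Step 2: joint parity decomposition of the `-1` eigenspace of `φ` under a commuting
semisimple endomorphism `ψ`. -/
lemma joint_parity (φ ψ : Module.End ℝ V) (hcomm : φ * ψ = ψ * φ)
    (hψss : ψ.IsSemisimple) (hψeig : ∀ x : ℝ, ψ.HasEigenvalue x → x = 1 ∨ x = -1) :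
    ∃ m, finrank ℝ (LinearMap.ker (φ + 1)) =
      finrank ℝ (LinearMap.ker (φ + 1) ⊓ LinearMap.ker (ψ + 1) : Submodule ℝ V)
      + finrank ℝ (LinearMap.ker (φ + 1) ⊓ LinearMap.ker (ψ - 1) : Submodule ℝ V) + 2 * m := by
  set U := LinearMap.ker (φ + 1) with hUdef
  have hU : ∀ x ∈ U, ψ x ∈ U := by
    intro x hx
    rw [hUdef, LinearMap.mem_ker] at hx ⊢
    have hmul : (φ + 1) * ψ = ψ * (φ + 1) := by
      rw [add_mul, mul_add, one_mul, mul_one, hcomm]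
    have hpt := congrArg (fun f : Module.End ℝ V => f x) hmul
    simp only [Module.End.mul_apply] at hpt
    rw [hpt, hx, map_zero]
  have hσss : Module.End.IsSemisimple (ψ.restrict hU) :=
    hψss.restrict ((Module.End.mem_invtSubmodule ψ).mpr fun x hx => hU x hx)
  have hσeig : ∀ x : ℝ, Module.End.HasEigenvalue (ψ.restrict hU) x → x = 1 ∨ x = -1 :=
    fun x hx => hψeig x (hasEigenvalue_of_restrict hU hx)
  obtain ⟨m, hm⟩ := finrank_eq_sum_eigen (ψ.restrict hU) hσss hσeig
  have hU1 : ∀ x ∈ U, (ψ + 1) x ∈ U := by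
    intro x hx
    simpa using U.add_mem (hU x hx) hx
  have hU2 : ∀ x ∈ U, (ψ - 1) x ∈ U := by
    intro x hx
    simpa using U.sub_mem (hU x hx) hx
  have hres1 : ψ.restrict hU + 1 = (ψ + 1).restrict hU1 := by
    refine LinearMap.ext fun v => Subtype.ext ?_
    simp [LinearMap.restrict_coe_apply]
  have hres2 : ψ.restrict hU - 1 = (ψ - 1).restrict hU2 := by
    refine LinearMap.ext fun v => Subtype.ext ?_
    simp [LinearMap.restrict_coe_apply]
  rw [hres1, hres2, finrank_ker_restrict _ hU1, finrank_ker_restrict _ hU2] at hm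
  exact ⟨m, hm⟩

end Stmt10Aux

open Stmt10Aux in
/-- For commuting semisimple orientation-preserving matrices `A, C` whose real eigenvalues all
lie in `{1, -1}`, the dimensions of the maximal subspaces on which `(A, C)` acts as `(-I, -I)`,
`(-I, I)`, and `(I, -I)` are all congruent modulo 2. -/
theorem stmt_10 (n : ℕ) (hn : 1 ≤ n) (A C : Matrix (Fin n) (Fin n) ℝ)
    (hAC : A * C = C * A) (hA : 0 < A.det) (hC : 0 < C.det)
    (hAss : Module.End.IsSemisimple
      (Matrix.toLin' A : Module.End ℝ (Fin n → ℝ)))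
    (hCss : Module.End.IsSemisimple
      (Matrix.toLin' C : Module.End ℝ (Fin n → ℝ)))
    (hAeig : ∀ x : ℝ, (Matrix.charpoly A).IsRoot x → x = 1 ∨ x = -1)
    (hCeig : ∀ x : ℝ, (Matrix.charpoly C).IsRoot x → x = 1 ∨ x = -1) :
    Module.finrank ℝ
        ↥(LinearMap.ker (Matrix.toLin' (A + 1)) ⊓ LinearMap.ker (Matrix.toLin' (C + 1))) % 2 =
      Module.finrank ℝ
        ↥(LinearMap.ker (Matrix.toLin' (A + 1)) ⊓ LinearMap.ker (Matrix.toLin' (C - 1))) % 2 ∧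
    Module.finrank ℝ
        ↥(LinearMap.ker (Matrix.toLin' (A + 1)) ⊓ LinearMap.ker (Matrix.toLin' (C - 1))) % 2 =
      Module.finrank ℝ
        ↥(LinearMap.ker (Matrix.toLin' (A - 1)) ⊓ LinearMap.ker (Matrix.toLin' (C + 1))) % 2 := by
  set φ : Module.End ℝ (Fin n → ℝ) := Matrix.toLin' A with hφ
  set ψ : Module.End ℝ (Fin n → ℝ) := Matrix.toLin' C with hψ
  have hcomm : φ * ψ = ψ * φ := by
    have h := congrArg Matrix.toLin' hAC
    simpa [Matrix.toLin'_mul, Module.End.mul_eq_comp, hφ, hψ] using h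
  have htA : Matrix.toLin' (A + 1) = φ + 1 := by
    rw [map_add, Matrix.toLin'_one, hφ]; rfl
  have htA' : Matrix.toLin' (A - 1) = φ - 1 := by
    rw [map_sub, Matrix.toLin'_one, hφ]; rfl
  have htC : Matrix.toLin' (C + 1) = ψ + 1 := by
    rw [map_add, Matrix.toLin'_one, hψ]; rfl
  have htC' : Matrix.toLin' (C - 1) = ψ - 1 := by
    rw [map_sub, Matrix.toLin'_one, hψ]; rfl
  have hchA : φ.charpoly = A.charpoly := by
    rw [← LinearMap.charpoly_toMatrix φ (Pi.basisFun ℝ (Fin n)),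
      LinearMap.toMatrix_eq_toMatrix', hφ, LinearMap.toMatrix'_toLin']
  have hchC : ψ.charpoly = C.charpoly := by
    rw [← LinearMap.charpoly_toMatrix ψ (Pi.basisFun ℝ (Fin n)),
      LinearMap.toMatrix_eq_toMatrix', hψ, LinearMap.toMatrix'_toLin']
  have hφeig : ∀ x : ℝ, φ.HasEigenvalue x → x = 1 ∨ x = -1 := by
    intro x hx
    apply hAeig
    rw [← hchA]
    exact ((Module.End.hasEigenvalue_iff_isRoot.mp hx).dvd (LinearMap.minpoly_dvd_charpoly φ))
  have hψeig : ∀ x : ℝ, ψ.HasEigenvalue x → x = 1 ∨ x = -1 := by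
    intro x hx
    apply hCeig
    rw [← hchC]
    exact ((Module.End.hasEigenvalue_iff_isRoot.mp hx).dvd (LinearMap.minpoly_dvd_charpoly ψ))
  have hdA : 0 < LinearMap.det φ := by rw [hφ, LinearMap.det_toLin']; exact hA
  have hdC : 0 < LinearMap.det ψ := by rw [hψ, LinearMap.det_toLin']; exact hC
  have hevenA := even_finrank_ker_add_one φ hAss hdA hφeig
  have hevenC := even_finrank_ker_add_one ψ hCss hdC hψeig
  obtain ⟨m₁, hm₁⟩ := joint_parity φ ψ hcomm hCss hψeig
  obtain ⟨m₂, hm₂⟩ := joint_parity ψ φ hcomm.symm hAss hφeig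
  rw [htA, htA', htC, htC']
  have hswap1 : (LinearMap.ker (ψ + 1) ⊓ LinearMap.ker (φ + 1) : Submodule ℝ (Fin n → ℝ))
      = LinearMap.ker (φ + 1) ⊓ LinearMap.ker (ψ + 1) := inf_comm _ _
  have hswap2 : (LinearMap.ker (ψ + 1) ⊓ LinearMap.ker (φ - 1) : Submodule ℝ (Fin n → ℝ))
      = LinearMap.ker (φ - 1) ⊓ LinearMap.ker (ψ + 1) := inf_comm _ _
  rw [hswap1, hswap2] at hm₂
  obtain ⟨k₁, hk₁⟩ := hevenA
  obtain ⟨k₂, hk₂⟩ := hevenC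
  omega
end
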